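/- arXiv:2308.10346 — 2 statements merged into one kernel-verified Lean document; each statement's English description precedes it below -/
import Mathlib

section
/- Let d ≥ 1, let H ∈ ℝ^{d×d} be positive definite, let c̃, k ∈ ℝ^d, let ν > 0, and let θ, θ̂ ∈ ℝ. Set σ² = (ν⁻¹ + c̃ᵀHc̃)⁻¹, A = H − σ²Hc̃c̃ᵀH, μ_b = A⁻¹(−k + σ²Hc̃(ν⁻¹θ + c̃ᵀk)), μ̄ = H⁻¹(−k + θ̂·Hc̃), τ = σ·Hc̃ (where σ = √σ²), and Δ = σ·(ν⁻¹θ + c̃ᵀk − θ̂/σ²). Then A is positive definite and there exists a constant C > 0, not depending on b, such that for all b ∈ ℝ^d: φ(b; μ_b, A⁻¹) = C · φ(b; μ̄, H⁻¹) · exp((1/2)(bᵀτ)² + Δ·(bᵀτ)). -/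
/-!
In terms of precision matrices, `log φ(b; μ, S⁻¹) = -½ bᵀSb + bᵀSμ + const`. The target precision
`A = H - ττᵀ` is a rank-one downdate of `H`, and `Aμ_b`, `Hμ̄` differ only by a multiple of `Hc̃`,
so the log-ratio of the two densities is `½ (bᵀτ)² + Δ bᵀτ` up to a constant. Positive
definiteness of `A` comes from completing the square, since `σ² c̃ᵀHc̃ < 1`.
-/

open MeasureTheory Matrix Real

/-- Multivariate Gaussian density `φ(x; μ, S)` for covariance `S`. -/
noncomputable def mvGauss {d : ℕ} (S : Matrix (Fin d) (Fin d) ℝ) (μ x : Fin d → ℝ) : ℝ :=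
  (2 * π) ^ (-(d : ℝ) / 2) * S.det ^ (-(1 : ℝ) / 2) *
    Real.exp (-(1 / 2) * ((x - μ) ⬝ᵥ (S⁻¹ *ᵥ (x - μ))))

namespace Matrix

variable {n R : Type*} [Fintype n]

lemma IsSymm.dotProduct_mulVec_comm [CommSemiring R] {S : Matrix n n R} (hS : S.IsSymm)
    (x y : n → R) : x ⬝ᵥ S *ᵥ y = y ⬝ᵥ S *ᵥ x := by
  rw [dotProduct_mulVec, ← mulVec_transpose, hS.eq, dotProduct_comm]

lemma IsSymm.dotProduct_mulVec_sub_sub [CommRing R] {S : Matrix n n R} (hS : S.IsSymm)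
    (x y : n → R) :
    (x - y) ⬝ᵥ S *ᵥ (x - y) = x ⬝ᵥ S *ᵥ x - 2 * (x ⬝ᵥ S *ᵥ y) + y ⬝ᵥ S *ᵥ y := by
  rw [mulVec_sub, dotProduct_sub, sub_dotProduct, sub_dotProduct, hS.dotProduct_mulVec_comm y x]
  ring

lemma dotProduct_mulVec_sub_smul_mul_vecMulVec_mul [CommRing R] (H : Matrix n n R) (a : R)
    (c x y : n → R) :
    x ⬝ᵥ (H - a • (H * vecMulVec c c * H)) *ᵥ y
      = x ⬝ᵥ H *ᵥ y - a * ((x ⬝ᵥ H *ᵥ c) * (c ⬝ᵥ H *ᵥ y)) := by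
  have hrank : (H * vecMulVec c c * H) *ᵥ y = (c ⬝ᵥ H *ᵥ y) • (H *ᵥ c) := by
    rw [← mulVec_mulVec, ← mulVec_mulVec, vecMulVec_mulVec, op_smul_eq_smul, mulVec_smul]
  rw [sub_mulVec, smul_mulVec, hrank, dotProduct_sub, dotProduct_smul, dotProduct_smul,
    smul_eq_mul, smul_eq_mul]
  ring

lemma IsSymm.sub_smul_mul_vecMulVec_mul [CommRing R] {H : Matrix n n R}
    (hH : H.IsSymm) (a : R) (c : n → R) : (H - a • (H * vecMulVec c c * H)).IsSymm := by
  refine hH.sub (IsSymm.smul ?_ a)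
  rw [IsSymm, transpose_mul, transpose_mul, transpose_vecMulVec, hH.eq, Matrix.mul_assoc]

/-- Completing the square, `xᵀ(H - a Hccᵀ H)x = yᵀHy + a(1 - a cᵀHc)(xᵀHc)²` with
`y = x - a (xᵀHc) c`. -/
theorem PosDef.sub_smul_mul_vecMulVec_mul {H : Matrix n n ℝ} (hH : H.PosDef) {a : ℝ}
    (ha : 0 < a) (c : n → ℝ) (hac : a * (c ⬝ᵥ H *ᵥ c) < 1) :
    (H - a • (H * vecMulVec c c * H)).PosDef := by
  have hHsymm : H.IsSymm := isHermitian_iff_isSymm.mp hH.isHermitian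
  refine PosDef.of_dotProduct_mulVec_pos
    (isHermitian_iff_isSymm.mpr (hHsymm.sub_smul_mul_vecMulVec_mul a c)) fun x hx => ?_
  rw [star_trivial, dotProduct_mulVec_sub_smul_mul_vecMulVec_mul,
    hHsymm.dotProduct_mulVec_comm c x]
  set s := x ⬝ᵥ H *ᵥ c
  set y := x - (a * s) • c
  have hsquare :
      x ⬝ᵥ H *ᵥ x - a * (s * s) = y ⬝ᵥ H *ᵥ y + a * (1 - a * (c ⬝ᵥ H *ᵥ c)) * s ^ 2 := by
    simp only [y, hHsymm.dotProduct_mulVec_sub_sub, mulVec_smul, dotProduct_smul,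
      smul_dotProduct, smul_eq_mul]
    ring
  have hgap : 0 < a * (1 - a * (c ⬝ᵥ H *ᵥ c)) := mul_pos ha (by linarith)
  rw [hsquare]
  by_cases hy : y = 0
  · have hs : s ≠ 0 := by
      rintro hs
      exact hx (by simpa [y, hs] using hy)
    rw [hy, mulVec_zero, dotProduct_zero, zero_add]
    positivity
  · have hyHy := hH.dotProduct_mulVec_pos hy
    rw [star_trivial] at hyHy
    positivity

end Matrix

lemma mvGauss_inv_eq {d : ℕ} {S : Matrix (Fin d) (Fin d) ℝ} (hS : S.PosDef) (μ x : Fin d → ℝ) :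
    mvGauss S⁻¹ μ x = (2 * π) ^ (-(d : ℝ) / 2) * √S.det * exp (-(1 / 2) * (μ ⬝ᵥ S *ᵥ μ)) *
      exp (-(1 / 2) * (x ⬝ᵥ S *ᵥ x) + x ⬝ᵥ S *ᵥ μ) := by
  have hSsymm : S.IsSymm := isHermitian_iff_isSymm.mp hS.isHermitian
  have hdet : S⁻¹.det ^ (-(1 : ℝ) / 2) = √S.det := by
    rw [det_nonsing_inv, Ring.inverse_eq_inv', inv_rpow hS.det_pos.le, ← rpow_neg hS.det_pos.le,
      sqrt_eq_rpow]
    norm_num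
  rw [mvGauss, nonsing_inv_nonsing_inv _ hS.det_pos.ne'.isUnit, hdet,
    hSsymm.dotProduct_mulVec_sub_sub, mul_assoc _ (exp _), ← exp_add]
  ring_nf

theorem stmt4_general (d : ℕ)
    (H : Matrix (Fin d) (Fin d) ℝ) (hH : H.PosDef)
    (c k : Fin d → ℝ) (ν : ℝ) (hν : 0 < ν) (θ θh : ℝ)
    (σ2 : ℝ) (hσ2 : σ2 = (ν⁻¹ + c ⬝ᵥ (H *ᵥ c))⁻¹)
    (A : Matrix (Fin d) (Fin d) ℝ)
    (hA : A = H - σ2 • (H * vecMulVec c c * H))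
    (μb : Fin d → ℝ)
    (hμb : μb = A⁻¹ *ᵥ (-k + (σ2 * (ν⁻¹ * θ + c ⬝ᵥ k)) • (H *ᵥ c)))
    (μbar : Fin d → ℝ)
    (hμbar : μbar = H⁻¹ *ᵥ (-k + θh • (H *ᵥ c)))
    (τ : Fin d → ℝ) (hτ : τ = Real.sqrt σ2 • (H *ᵥ c))
    (Δ : ℝ) (hΔ : Δ = Real.sqrt σ2 * (ν⁻¹ * θ + c ⬝ᵥ k - θh / σ2)) :
    A.PosDef ∧
      ∃ C : ℝ, 0 < C ∧ ∀ b : Fin d → ℝ,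
        mvGauss A⁻¹ μb b =
          C * (mvGauss H⁻¹ μbar b *
            Real.exp ((1 / 2) * (b ⬝ᵥ τ) ^ 2 + Δ * (b ⬝ᵥ τ))) := by
  have hcHc : 0 ≤ c ⬝ᵥ H *ᵥ c := by simpa using hH.posSemidef.dotProduct_mulVec_nonneg c
  have hσ2pos : 0 < σ2 := hσ2 ▸ inv_pos.2 (by positivity)
  have hσ2inv : σ2 * (ν⁻¹ + c ⬝ᵥ H *ᵥ c) = 1 := hσ2 ▸ inv_mul_cancel₀ (by positivity)
  have hApd : A.PosDef :=
    hA ▸ hH.sub_smul_mul_vecMulVec_mul hσ2pos c (by nlinarith [inv_pos.2 hν])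
  have hAμb : A *ᵥ μb = -k + (σ2 * (ν⁻¹ * θ + c ⬝ᵥ k)) • (H *ᵥ c) := by
    rw [hμb, mulVec_mulVec, mul_nonsing_inv _ hApd.det_pos.ne'.isUnit, one_mulVec]
  have hHμbar : H *ᵥ μbar = -k + θh • (H *ᵥ c) := by
    rw [hμbar, mulVec_mulVec, mul_nonsing_inv _ hH.det_pos.ne'.isUnit, one_mulVec]
  have hexponent : ∀ b : Fin d → ℝ, -(1 / 2) * (b ⬝ᵥ A *ᵥ b) + b ⬝ᵥ A *ᵥ μb
      = (-(1 / 2) * (b ⬝ᵥ H *ᵥ b) + b ⬝ᵥ H *ᵥ μbar) + ((1 / 2) * (b ⬝ᵥ τ) ^ 2 + Δ * (b ⬝ᵥ τ)) := by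
    intro b
    rw [hAμb, hHμbar, hτ, hΔ, hA, dotProduct_mulVec_sub_smul_mul_vecMulVec_mul,
      (isHermitian_iff_isSymm.mp hH.isHermitian).dotProduct_mulVec_comm c b]
    simp only [dotProduct_add, dotProduct_smul, smul_eq_mul]
    field_simp
    rw [sq_sqrt hσ2pos.le]
    ring
  refine ⟨hApd, √A.det * exp (-(1 / 2) * (μb ⬝ᵥ A *ᵥ μb)) /
    (√H.det * exp (-(1 / 2) * (μbar ⬝ᵥ H *ᵥ μbar))), ?_, fun b => ?_⟩
  · have := hApd.det_pos
    have := hH.det_pos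
    positivity
  · have := (sqrt_pos.2 hH.det_pos).ne'
    rw [mvGauss_inv_eq hApd, mvGauss_inv_eq hH, hexponent, exp_add]
    field_simp

theorem stmt4 (d : ℕ) (hd : 1 ≤ d)
    (H : Matrix (Fin d) (Fin d) ℝ) (hH : H.PosDef)
    (c k : Fin d → ℝ) (ν : ℝ) (hν : 0 < ν) (θ θh : ℝ)
    (σ2 : ℝ) (hσ2 : σ2 = (ν⁻¹ + c ⬝ᵥ (H *ᵥ c))⁻¹)
    (A : Matrix (Fin d) (Fin d) ℝ)
    (hA : A = H - σ2 • (H * vecMulVec c c * H))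
    (μb : Fin d → ℝ)
    (hμb : μb = A⁻¹ *ᵥ (-k + (σ2 * (ν⁻¹ * θ + c ⬝ᵥ k)) • (H *ᵥ c)))
    (μbar : Fin d → ℝ)
    (hμbar : μbar = H⁻¹ *ᵥ (-k + θh • (H *ᵥ c)))
    (τ : Fin d → ℝ) (hτ : τ = Real.sqrt σ2 • (H *ᵥ c))
    (Δ : ℝ) (hΔ : Δ = Real.sqrt σ2 * (ν⁻¹ * θ + c ⬝ᵥ k - θh / σ2)) :
    A.PosDef ∧
      ∃ C : ℝ, 0 < C ∧ ∀ b : Fin d → ℝ,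
        mvGauss A⁻¹ μb b =
          C * (mvGauss H⁻¹ μbar b *
            Real.exp ((1 / 2) * (b ⬝ᵥ τ) ^ 2 + Δ * (b ⬝ᵥ τ))) :=
  stmt4_general d H hH c k ν hν θ θh σ2 hσ2 A hA μb hμb μbar hμbar τ hτ Δ hΔ
end

section
/- Let d ≥ 1 and let Σ ∈ ℝ^{d×d} be positive definite. For μ ∈ ℝ^d define h(μ) = ∫_O φ(b; μ, Σ) db and μ̃(μ) = (1/h(μ)) ∫_O b · φ(b; μ, Σ) db (the mean of the Gaussian N(μ, Σ) truncated to O). Then h(μ) > 0 for all μ, the function μ ↦ log h(μ) is differentiable on ℝ^d, and its gradient is ∇_μ log h(μ) = Σ⁻¹(μ̃(μ) − μ). -/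
/-!
Since `S⁻¹` is positive definite it is coercive, so `φ(b; m) ≤ C exp(-c |b - m|²)`; for `m` within
distance one of `μ` this is in turn bounded by a fixed Gaussian centred at `μ`. Such a bound
also dominates the `m`-derivative `φ(b; m) S⁻¹(b - m)` after halving `c`, so `h` can be
differentiated under the integral sign: `∇h(μ) = S⁻¹ ∫_O φ(b; μ)(b - μ) db = h(μ) S⁻¹(μ̃ - μ)`.
Positivity of `h` holds because `φ > 0` on the open nonempty orthant, and the chain rule for `log`
finishes the proof.
-/

open MeasureTheory Matrix Real

/-- The positive orthant in `ℝ^d`. -/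
def posOrthant (d : ℕ) : Set (Fin d → ℝ) := {v | ∀ i, 0 < v i}

section QuadraticForm

variable {n : Type*} [Fintype n]

open scoped MatrixOrder in
theorem Matrix.PosDef.exists_pos_mul_dotProduct_self_le [DecidableEq n] {A : Matrix n n ℝ}
    (hA : A.PosDef) : ∃ c > 0, ∀ y : n → ℝ, c * (y ⬝ᵥ y) ≤ y ⬝ᵥ (A *ᵥ y) := by
  cases isEmpty_or_nonempty n
  · exact ⟨1, one_pos, fun y => by simp [dotProduct]⟩
  -- the spectrum of `A` is a finite set of positive reals, so `c • 1 ≤ A` for some `c > 0`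
  obtain ⟨c, hc, hcA⟩ := (CFC.exists_pos_algebraMap_le_iff hA.isHermitian).2
    fun _ hx => hA.isStrictlyPositive.spectrum_pos hx
  refine ⟨c, hc, fun y => ?_⟩
  have := (Matrix.le_iff.1 hcA).dotProduct_mulVec_nonneg y
  rw [Algebra.algebraMap_eq_smul_one, sub_mulVec, smul_mulVec, one_mulVec, dotProduct_sub,
    dotProduct_smul, star_trivial, smul_eq_mul] at this
  linarith

theorem Matrix.IsHermitian.dotProduct_mulVec_comm {A : Matrix n n ℝ} (hA : A.IsHermitian)
    (x y : n → ℝ) : x ⬝ᵥ (A *ᵥ y) = y ⬝ᵥ (A *ᵥ x) := by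
  rw [dotProduct_mulVec, ← mulVec_transpose, ← conjTranspose_eq_transpose_of_trivial, hA,
    dotProduct_comm]

noncomputable def Matrix.toBilinCLM [DecidableEq n] (A : Matrix n n ℝ) :
    (n → ℝ) →L[ℝ] (n → ℝ) →L[ℝ] ℝ :=
  (Matrix.toLinearMap₂' ℝ A).toContinuousBilinearMap

@[simp]
theorem Matrix.toBilinCLM_apply [DecidableEq n] (A : Matrix n n ℝ) (x y : n → ℝ) :
    A.toBilinCLM x y = x ⬝ᵥ (A *ᵥ y) :=
  Matrix.toLinearMap₂'_apply' A x y

end QuadraticForm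

section GaussianBounds

variable {ι : Type*} [Fintype ι]

theorem integrable_exp_neg_mul_dotProduct_self_sub {a : ℝ} (ha : 0 < a) (s : ι → ℝ) :
    Integrable fun b : ι → ℝ => exp (-a * ((b - s) ⬝ᵥ (b - s))) := by
  refine (Integrable.fintype_prod (f := fun i t => exp (-a * (t - s i) ^ 2))
    fun i => (integrable_exp_neg_mul_sq ha).comp_sub_right (s i)).congr (ae_of_all _ fun b => ?_)
  simp [dotProduct, Finset.mul_sum, ← Real.exp_sum, sq]

theorem dotProduct_self_nonneg (y : ι → ℝ) : 0 ≤ y ⬝ᵥ y :=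
  Finset.sum_nonneg fun i _ => mul_self_nonneg (y i)

theorem norm_le_one_add_dotProduct_self (y : ι → ℝ) : ‖y‖ ≤ 1 + y ⬝ᵥ y := by
  have hq : 0 ≤ 1 + y ⬝ᵥ y := add_nonneg zero_le_one (dotProduct_self_nonneg y)
  refine (pi_norm_le_iff_of_nonneg hq).2 fun i => ?_
  have hi : y i ^ 2 ≤ y ⬝ᵥ y := by
    simpa [dotProduct, sq] using Finset.single_le_sum (f := fun j => y j * y j)
      (fun j _ => mul_self_nonneg (y j)) (Finset.mem_univ i)
  rw [Real.norm_eq_abs]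
  nlinarith [abs_nonneg (y i), sq_abs (y i)]

theorem norm_mul_exp_neg_mul_dotProduct_self_le {a : ℝ} (ha : 0 < a) (y : ι → ℝ) :
    ‖y‖ * exp (-a * (y ⬝ᵥ y)) ≤ (1 + 2 / a) * exp (-(a / 2) * (y ⬝ᵥ y)) := by
  set q := y ⬝ᵥ y
  have hq : 0 ≤ q := dotProduct_self_nonneg y
  have hexp : a / 2 * q + 1 ≤ exp (a / 2 * q) := add_one_le_exp _
  have h1 : 1 + q ≤ (1 + 2 / a) * exp (a / 2 * q) := by
    have : (1 + 2 / a) * (a / 2 * q + 1) = 1 + q + a / 2 * q + 2 / a := by field_simp; ring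
    nlinarith [div_pos two_pos ha]
  calc ‖y‖ * exp (-a * q) ≤ (1 + q) * exp (-a * q) := by
        gcongr; exact norm_le_one_add_dotProduct_self y
    _ ≤ (1 + 2 / a) * exp (a / 2 * q) * exp (-a * q) := by gcongr
    _ = (1 + 2 / a) * exp (-(a / 2) * q) := by rw [mul_assoc, ← exp_add]; ring_nf

theorem exp_neg_mul_dotProduct_self_sub_le {a : ℝ} (ha : 0 ≤ a) {m μ : ι → ℝ}
    (hm : dist m μ ≤ 1) (b : ι → ℝ) :
    exp (-a * ((b - m) ⬝ᵥ (b - m))) ≤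
      exp (a * Fintype.card ι) * exp (-(a / 2) * ((b - μ) ⬝ᵥ (b - μ))) := by
  have hcoord : ∀ i, (b i - μ i) ^ 2 ≤ 2 * (b i - m i) ^ 2 + 2 := by
    intro i
    have : |m i - μ i| ≤ 1 := (dist_le_pi_dist m μ i).trans hm
    nlinarith [abs_le.1 this, sq_nonneg (b i - m i - (m i - μ i))]
  have hsum : (b - μ) ⬝ᵥ (b - μ) ≤ 2 * ((b - m) ⬝ᵥ (b - m)) + 2 * Fintype.card ι := by
    simp only [dotProduct, Pi.sub_apply, ← sq]
    calc ∑ i, (b i - μ i) ^ 2 ≤ ∑ i, (2 * (b i - m i) ^ 2 + 2) :=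
          Finset.sum_le_sum fun i _ => hcoord i
      _ = _ := by simp [Finset.sum_add_distrib, Finset.mul_sum, mul_comm]
  rw [← exp_add, exp_le_exp]
  nlinarith

end GaussianBounds

section Gaussian

variable {d : ℕ} {S : Matrix (Fin d) (Fin d) ℝ}

theorem mvGauss_pos (hS : S.PosDef) (m b : Fin d → ℝ) : 0 < mvGauss S m b := by
  have := hS.det_pos
  unfold mvGauss
  positivity

theorem continuous_mvGauss (S : Matrix (Fin d) (Fin d) ℝ) (m : Fin d → ℝ) :
    Continuous (mvGauss S m) := by
  unfold mvGauss
  fun_prop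

theorem exists_mvGauss_le (hS : S.PosDef) :
    ∃ C > 0, ∃ c > 0, ∀ m b, mvGauss S m b ≤ C * exp (-c * ((b - m) ⬝ᵥ (b - m))) := by
  obtain ⟨c, hc, hcoer⟩ := hS.inv.exists_pos_mul_dotProduct_self_le
  have := hS.det_pos
  refine ⟨(2 * π) ^ (-(d : ℝ) / 2) * S.det ^ (-(1 : ℝ) / 2), by positivity, c / 2, half_pos hc,
    fun m b => ?_⟩
  unfold mvGauss
  gcongr _ * exp ?_
  nlinarith [hcoer (b - m)]

theorem exists_norm_mvGauss_smul_sub_le (hS : S.PosDef) :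
    ∃ K > 0, ∃ c > 0, ∀ m b, ‖mvGauss S m b • (b - m)‖ ≤ K * exp (-c * ((b - m) ⬝ᵥ (b - m))) := by
  obtain ⟨C, hC, c, hc, hle⟩ := exists_mvGauss_le hS
  refine ⟨C * (1 + 2 / c), by positivity, c / 2, half_pos hc, fun m b => ?_⟩
  rw [norm_smul, Real.norm_of_nonneg (mvGauss_pos hS m b).le]
  calc mvGauss S m b * ‖b - m‖ ≤ C * (‖b - m‖ * exp (-c * ((b - m) ⬝ᵥ (b - m)))) := by
        rw [mul_left_comm, mul_comm]; gcongr; exact hle m b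
    _ ≤ C * ((1 + 2 / c) * exp (-(c / 2) * ((b - m) ⬝ᵥ (b - m)))) :=
        mul_le_mul_of_nonneg_left (norm_mul_exp_neg_mul_dotProduct_self_le hc (b - m)) hC.le
    _ = _ := by ring

theorem integrable_mvGauss (hS : S.PosDef) (m : Fin d → ℝ) : Integrable (mvGauss S m) := by
  obtain ⟨C, -, c, hc, hle⟩ := exists_mvGauss_le hS
  refine ((integrable_exp_neg_mul_dotProduct_self_sub hc m).const_mul C).mono'
    (continuous_mvGauss S m).aestronglyMeasurable (ae_of_all _ fun b => ?_)
  rw [Real.norm_of_nonneg (mvGauss_pos hS m b).le]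
  exact hle m b

theorem integrable_mvGauss_smul_sub (hS : S.PosDef) (m : Fin d → ℝ) :
    Integrable fun b => mvGauss S m b • (b - m) := by
  obtain ⟨K, -, c, hc, hle⟩ := exists_norm_mvGauss_smul_sub_le hS
  exact ((integrable_exp_neg_mul_dotProduct_self_sub hc m).const_mul K).mono'
    ((continuous_mvGauss S m).smul (continuous_id.sub continuous_const)).aestronglyMeasurable
    (ae_of_all _ (hle m))

theorem hasFDerivAt_mvGauss (hS : S.PosDef) (b m : Fin d → ℝ) :
    HasFDerivAt (fun m => mvGauss S m b) (mvGauss S m b • S⁻¹.toBilinCLM (b - m)) m := by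
  have hsub : HasFDerivAt (fun m : Fin d → ℝ => b - m) (-ContinuousLinearMap.id ℝ _) m :=
    (hasFDerivAt_id m).const_sub b
  have hQ := (S⁻¹.toBilinCLM.hasFDerivAt_of_bilinear hsub hsub).const_mul (-(1 / 2 : ℝ))
    |>.exp.const_mul ((2 * π) ^ (-(d : ℝ) / 2) * S.det ^ (-(1 : ℝ) / 2))
  have hfun : (fun m => mvGauss S m b) = fun m => (2 * π) ^ (-(d : ℝ) / 2) *
      S.det ^ (-(1 : ℝ) / 2) * exp (-(1 / 2) * S⁻¹.toBilinCLM (b - m) (b - m)) := by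
    simp [mvGauss]
  rw [hfun]
  refine hQ.congr_fderiv ?_
  ext v
  simp only [ContinuousLinearMap.precompR_apply, ContinuousLinearMap.precompL_apply,
    ContinuousLinearMap.compL_apply, ContinuousLinearMap.comp_id,
    ContinuousLinearMap.id_apply, map_neg, _root_.neg_apply, _root_.add_apply, _root_.smul_apply,
    smul_eq_mul, toBilinCLM_apply, mvGauss, hS.inv.isHermitian.dotProduct_mulVec_comm v (b - m)]
  ring

theorem hasFDerivAt_setIntegral_mvGauss (hS : S.PosDef) (s : Set (Fin d → ℝ)) (μ : Fin d → ℝ) :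
    HasFDerivAt (fun m => ∫ b in s, mvGauss S m b)
      (S⁻¹.toBilinCLM (∫ b in s, mvGauss S μ b • (b - μ))) μ := by
  obtain ⟨K, hK, c, hc, hle⟩ := exists_norm_mvGauss_smul_sub_le hS
  set T := S⁻¹.toBilinCLM
  rw [← T.integral_comp_comm (integrable_mvGauss_smul_sub hS μ).restrict]
  refine hasFDerivAt_integral_of_dominated_of_fderiv_le
    (F' := fun m b => T (mvGauss S m b • (b - m)))
    (bound := fun b => ‖T‖ * K * exp (c * d) * exp (-(c / 2) * ((b - μ) ⬝ᵥ (b - μ))))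
    (Metric.closedBall_mem_nhds μ one_pos)
    (Filter.Eventually.of_forall fun m => (continuous_mvGauss S m).aestronglyMeasurable)
    (integrable_mvGauss hS μ).restrict ?_ (ae_of_all _ fun b m hm => ?_)
    ((integrable_exp_neg_mul_dotProduct_self_sub (half_pos hc) μ).const_mul _).restrict
    (ae_of_all _ fun b m _ => ?_)
  · exact (T.continuous.comp ((continuous_mvGauss S μ).smul
      (continuous_id.sub continuous_const))).aestronglyMeasurable
  · have hshift := exp_neg_mul_dotProduct_self_sub_le hc.le (Metric.mem_closedBall.1 hm) b
    rw [Fintype.card_fin] at hshift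
    calc ‖T (mvGauss S m b • (b - m))‖ ≤ ‖T‖ * (K * exp (-c * ((b - m) ⬝ᵥ (b - m)))) :=
          (T.le_opNorm _).trans (by gcongr; exact hle m b)
      _ ≤ ‖T‖ * (K * (exp (c * d) * exp (-(c / 2) * ((b - μ) ⬝ᵥ (b - μ))))) := by gcongr
      _ = _ := by ring
  · simpa only [map_smul] using hasFDerivAt_mvGauss hS b m

theorem setIntegral_mvGauss_pos (hS : S.PosDef) {s : Set (Fin d → ℝ)} (hs : IsOpen s)
    (hne : s.Nonempty) (m : Fin d → ℝ) : 0 < ∫ b in s, mvGauss S m b := by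
  refine (setIntegral_pos_iff_support_of_nonneg_ae
    (ae_of_all _ fun b => (mvGauss_pos hS m b).le) (integrable_mvGauss hS m).integrableOn).2 ?_
  rw [Function.support_eq_univ fun b => (mvGauss_pos hS m b).ne', Set.univ_inter]
  exact hs.measure_pos volume hne

end Gaussian

theorem isOpen_posOrthant (d : ℕ) : IsOpen (posOrthant d) := by
  simpa only [posOrthant, Set.ofPred_forall] using
    isOpen_iInter_of_finite fun i => isOpen_lt continuous_const (continuous_apply i)

theorem posOrthant_nonempty (d : ℕ) : (posOrthant d).Nonempty :=
  ⟨fun _ => 1, fun _ => one_pos⟩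

theorem stmt5_general (d : ℕ)
    (S : Matrix (Fin d) (Fin d) ℝ) (hS : S.PosDef)
    (h : (Fin d → ℝ) → ℝ)
    (hh : ∀ μ, h μ = ∫ b in posOrthant d, mvGauss S μ b)
    (μtil : (Fin d → ℝ) → (Fin d → ℝ))
    (hμtil : ∀ μ, μtil μ = (h μ)⁻¹ • ∫ b in posOrthant d, mvGauss S μ b • b) :
    (∀ μ, 0 < h μ) ∧
    ∀ μ : Fin d → ℝ, ∃ L : (Fin d → ℝ) →L[ℝ] ℝ,
      HasFDerivAt (fun m => Real.log (h m)) L μ ∧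
      ∀ v : Fin d → ℝ, L v = (S⁻¹ *ᵥ (μtil μ - μ)) ⬝ᵥ v := by
  have hpos : ∀ μ, 0 < h μ := fun μ =>
    (hh μ).symm ▸ setIntegral_mvGauss_pos hS (isOpen_posOrthant d) (posOrthant_nonempty d) μ
  refine ⟨hpos, fun μ => ?_⟩
  have hmean : ∫ b in posOrthant d, mvGauss S μ b • (b - μ) = h μ • (μtil μ - μ) := by
    have hsplit : (fun b => mvGauss S μ b • b) =
        fun b => mvGauss S μ b • (b - μ) + mvGauss S μ b • μ :=
      funext fun b => by rw [← smul_add, sub_add_cancel]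
    have hint : Integrable fun b => mvGauss S μ b • b := by
      rw [hsplit]
      exact (integrable_mvGauss_smul_sub hS μ).add ((integrable_mvGauss hS μ).smul_const μ)
    rw [hμtil, smul_sub, smul_inv_smul₀ (hpos μ).ne', hh, ← integral_smul_const,
      ← integral_sub hint.restrict ((integrable_mvGauss hS μ).smul_const μ).restrict]
    simp_rw [smul_sub]
  have hderiv : HasFDerivAt h (S⁻¹.toBilinCLM (h μ • (μtil μ - μ))) μ := by
    rw [← hmean, show h = fun m => ∫ b in posOrthant d, mvGauss S m b from funext hh]
    exact hasFDerivAt_setIntegral_mvGauss hS (posOrthant d) μ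
  refine ⟨_, hderiv.log (hpos μ).ne', fun v => ?_⟩
  simp only [map_smul, smul_smul, inv_mul_cancel₀ (hpos μ).ne', one_smul, toBilinCLM_apply]
  rw [hS.inv.isHermitian.dotProduct_mulVec_comm, dotProduct_comm]

theorem stmt5 (d : ℕ) (hd : 1 ≤ d)
    (S : Matrix (Fin d) (Fin d) ℝ) (hS : S.PosDef)
    (h : (Fin d → ℝ) → ℝ)
    (hh : ∀ μ, h μ = ∫ b in posOrthant d, mvGauss S μ b)
    (μtil : (Fin d → ℝ) → (Fin d → ℝ))
    (hμtil : ∀ μ, μtil μ = (h μ)⁻¹ • ∫ b in posOrthant d, mvGauss S μ b • b) :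
    (∀ μ, 0 < h μ) ∧
    ∀ μ : Fin d → ℝ, ∃ L : (Fin d → ℝ) →L[ℝ] ℝ,
      HasFDerivAt (fun m => Real.log (h m)) L μ ∧
      ∀ v : Fin d → ℝ, L v = (S⁻¹ *ᵥ (μtil μ - μ)) ⬝ᵥ v :=
  stmt5_general d S hS h hh μtil hμtil
end
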